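/- arXiv:1308.6175 — 2 statements merged into one kernel-verified Lean document; each statement's English description precedes it below -/
import Mathlib

section
/- Let C_0 ⊆ C_1 ⊆ ... ⊆ C_{a-1} ⊆ C_a = (ZMod 2)^n be a family of nested binary linear codes that is closed under Schur product. Then for every basis b_1, ..., b_n of (ZMod 2)^n such that b_1, ..., b_{k_i} span C_i for each i, the code formula set Γ_CF equals the Construction D set Λ_D. -/
noncomputable section

/-- The natural embedding of `(ZMod 2)^n` into `ℤ^n`, applying coordinatewise the map
sending `0` to `0` and `1` to `1`. -/
def psi {n : ℕ} (x : Fin n → ZMod 2) : Fin n → ℤ := fun k => ((x k).val : ℤ)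

/-- The code formula set `Γ_CF = ψ(C₀) + 2ψ(C₁) + ... + 2^{a-1}ψ(C_{a-1}) + 2^a ℤ^n`
associated to a chain of binary codes `C₀ ⊆ C₁ ⊆ ... ⊆ C_a = (ZMod 2)^n`. -/
def GammaCF {n : ℕ} (a : ℕ) (C : ℕ → Submodule (ZMod 2) (Fin n → ZMod 2)) :
    Set (Fin n → ℤ) :=
  { x | ∃ (c : ℕ → Fin n → ZMod 2) (l : Fin n → ℤ),
      (∀ i < a, c i ∈ C i) ∧
      x = (∑ i ∈ Finset.range a, (2 ^ i : ℤ) • psi (c i)) + (2 ^ a : ℤ) • l }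

/-- The basis `b` of `(ZMod 2)^n` is such that its first `k_i = dim C_i` vectors
`b_1, ..., b_{k_i}` span `C_i`, for each `i < a`. -/
def SpansChain {n : ℕ} (a : ℕ) (C : ℕ → Submodule (ZMod 2) (Fin n → ZMod 2))
    (b : Module.Basis (Fin n) (ZMod 2) (Fin n → ZMod 2)) : Prop :=
  ∀ i < a, Submodule.span (ZMod 2)
      ((fun j => b j) '' {j : Fin n | (j : ℕ) < Module.finrank (ZMod 2) (C i)}) = C i

/-- The Construction D set `Λ_D` associated to a chain of codes `C` and a basis `b`:
all vectors `Σ_{i<a} 2^i Σ_{j ≤ k_i} α_j^{(i)} ψ(b_j) + 2^a l` with `α_j^{(i)} ∈ {0,1}`,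
`l ∈ ℤ^n`, and `k_i = dim C_i`. -/
def LambdaD {n : ℕ} (a : ℕ) (C : ℕ → Submodule (ZMod 2) (Fin n → ZMod 2))
    (b : Module.Basis (Fin n) (ZMod 2) (Fin n → ZMod 2)) : Set (Fin n → ℤ) :=
  { x | ∃ (α : ℕ → Fin n → ℤ) (l : Fin n → ℤ),
      (∀ i j, α i j = 0 ∨ α i j = 1) ∧
      x = (∑ i ∈ Finset.range a, (2 ^ i : ℤ) •
            ∑ j ∈ Finset.univ.filter
                (fun j : Fin n => (j : ℕ) < Module.finrank (ZMod 2) (C i)),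
              α i j • psi (b j)) + (2 ^ a : ℤ) • l }


/-!
Over `ℤ`, `ψ c + ψ d = ψ (c + d) + 2 ψ (c ∗ d)`: adding two codewords of `C_i` produces a
carry `c ∗ d` one level up, and Schur-closure keeps it in `C_{i+1}`. Hence `Γ_CF` is closed under
addition, and since it contains `2^a ℤ^n` it is a subgroup of `ℤ^n`. It contains every `2^i ψ(b_j)`
with `j < k_i`, so `Λ_D ⊆ Γ_CF`. Conversely, writing `c ∈ C_0` in the basis, `ψ c` differs from
`Σ_j α_j ψ(b_j)` by twice an element of the code formula set of the shifted chain
`C_1 ⊆ C_2 ⊆ …`, and induction on `a` gives `Γ_CF ⊆ Λ_D`.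
-/

open Finset

variable {n m : ℕ}

lemma psi_zero : psi (0 : Fin n → ZMod 2) = 0 := by
  funext k; simp [psi]

lemma psi_smul (r : ZMod 2) (x : Fin n → ZMod 2) : psi (r • x) = (r.val : ℤ) • psi x := by
  have h : ∀ u v : ZMod 2, ((u * v).val : ℤ) = u.val * v.val := by decide
  funext k
  exact h r (x k)

lemma psi_add_psi (c d : Fin n → ZMod 2) :
    psi c + psi d = psi (c + d) + (2 : ℤ) • psi (c * d) := by
  have h : ∀ u v : ZMod 2, (u.val : ℤ) + v.val = (u + v).val + 2 * (u * v).val := by decide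
  funext k
  exact h (c k) (d k)

lemma sum_range_succ_two_pow_smul {M : Type*} [AddCommGroup M] (f : ℕ → M) (l : M) :
    (∑ i ∈ range (m + 1), (2 ^ i : ℤ) • f i) + (2 ^ (m + 1) : ℤ) • l
      = f 0 + (2 : ℤ) • ((∑ i ∈ range m, (2 ^ i : ℤ) • f (i + 1)) + (2 ^ m : ℤ) • l) := by
  rw [sum_range_succ']
  simp only [smul_add, smul_sum, smul_smul, ← pow_succ', pow_zero, one_smul]
  abel

def SchurClosed (m : ℕ) (D : ℕ → Submodule (ZMod 2) (Fin n → ZMod 2)) : Prop :=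
  ∀ t, t + 1 < m → ∀ c ∈ D t, ∀ d ∈ D t, c * d ∈ D (t + 1)

lemma SchurClosed.shift {D : ℕ → Submodule (ZMod 2) (Fin n → ZMod 2)}
    (hD : SchurClosed (m + 1) D) : SchurClosed m (fun t => D (t + 1)) :=
  fun t ht => hD (t + 1) (by omega)

lemma SpansChain.shift {D : ℕ → Submodule (ZMod 2) (Fin n → ZMod 2)}
    {b : Module.Basis (Fin n) (ZMod 2) (Fin n → ZMod 2)}
    (hb : SpansChain (m + 1) D b) : SpansChain m (fun t => D (t + 1)) b :=
  fun t ht => hb (t + 1) (by omega)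

section GammaCF

variable {D : ℕ → Submodule (ZMod 2) (Fin n → ZMod 2)}

lemma gammaCF_zero : GammaCF 0 D = Set.univ :=
  Set.eq_univ_of_forall fun x => ⟨0, x, by simp, by simp⟩

lemma mem_gammaCF_succ {x : Fin n → ℤ} :
    x ∈ GammaCF (m + 1) D ↔
      ∃ c ∈ D 0, ∃ y ∈ GammaCF m (fun t => D (t + 1)), x = psi c + (2 : ℤ) • y := by
  constructor
  · rintro ⟨c, l, hc, rfl⟩
    exact ⟨c 0, hc 0 m.succ_pos, _, ⟨fun t => c (t + 1), l, fun i hi => hc (i + 1) (by omega),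
      rfl⟩, sum_range_succ_two_pow_smul (fun i => psi (c i)) l⟩
  · rintro ⟨c, hc, y, ⟨cy, l, hcy, rfl⟩, rfl⟩
    refine ⟨fun t => Nat.casesOn t c cy, l, ?_,
      (sum_range_succ_two_pow_smul (fun i => psi (Nat.casesOn i c cy)) l).symm⟩
    rintro (_ | i) hi
    exacts [hc, hcy i (by omega)]

lemma two_pow_smul_mem_gammaCF (l : Fin n → ℤ) : (2 ^ m : ℤ) • l ∈ GammaCF m D :=
  ⟨0, l, fun i _ => zero_mem _, by simp [psi_zero]⟩

lemma zero_mem_gammaCF : (0 : Fin n → ℤ) ∈ GammaCF m D := by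
  simpa using two_pow_smul_mem_gammaCF (m := m) (D := D) 0

lemma two_pow_smul_psi_mem_gammaCF {i : ℕ} (hi : i < m) {c : Fin n → ZMod 2} (hc : c ∈ D i) :
    (2 ^ i : ℤ) • psi c ∈ GammaCF m D := by
  classical
  refine ⟨fun t => if t = i then c else 0, 0, fun t _ => ?_, ?_⟩
  · dsimp only
    split_ifs with h
    exacts [h ▸ hc, zero_mem _]
  · rw [sum_eq_single_of_mem i (mem_range.mpr hi) fun t _ ht => by simp [ht, psi_zero]]
    simp

lemma psi_mul_mem_gammaCF_shift (hD : SchurClosed (m + 1) D) {c d : Fin n → ZMod 2}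
    (hc : c ∈ D 0) (hd : d ∈ D 0) : psi (c * d) ∈ GammaCF m (fun t => D (t + 1)) := by
  cases m with
  | zero => simp [gammaCF_zero]
  | succ m => simpa using two_pow_smul_psi_mem_gammaCF m.succ_pos (hD 0 (by omega) c hc d hd)

lemma add_mem_gammaCF (hD : SchurClosed m D) {x y : Fin n → ℤ} (hx : x ∈ GammaCF m D)
    (hy : y ∈ GammaCF m D) : x + y ∈ GammaCF m D := by
  induction m generalizing D x y with
  | zero => simp [gammaCF_zero]
  | succ m ih =>
    obtain ⟨c, hc, u, hu, rfl⟩ := mem_gammaCF_succ.mp hx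
    obtain ⟨d, hd, v, hv, rfl⟩ := mem_gammaCF_succ.mp hy
    have hcarry := psi_mul_mem_gammaCF_shift hD hc hd
    refine mem_gammaCF_succ.mpr ⟨c + d, add_mem hc hd, psi (c * d) + (u + v),
      ih hD.shift hcarry (ih hD.shift hu hv), ?_⟩
    rw [smul_add, ← add_assoc (psi (c + d)), ← psi_add_psi, smul_add]
    abel

def gammaCFAddSubmonoid (hD : SchurClosed m D) : AddSubmonoid (Fin n → ℤ) where
  carrier := GammaCF m D
  add_mem' := add_mem_gammaCF hD
  zero_mem' := zero_mem_gammaCF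

-- `-x = (2^m - 1) • x + 2^m • (-x)`, and `2^m ℤ^n ⊆ Γ_CF`.
lemma neg_mem_gammaCF (hD : SchurClosed m D) {x : Fin n → ℤ} (hx : x ∈ GammaCF m D) :
    -x ∈ GammaCF m D := by
  have h := add_mem_gammaCF hD (nsmul_mem (S := gammaCFAddSubmonoid hD) hx (2 ^ m - 1))
    (two_pow_smul_mem_gammaCF (-x))
  convert h using 1
  rw [← natCast_zsmul, Nat.cast_sub Nat.one_le_two_pow, sub_smul, smul_neg]
  push_cast
  abel

def gammaCFAddSubgroup (hD : SchurClosed m D) : AddSubgroup (Fin n → ℤ) :=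
  { gammaCFAddSubmonoid hD with neg_mem' := neg_mem_gammaCF hD }

end GammaCF

section Decomposition

variable {D : ℕ → Submodule (ZMod 2) (Fin n → ZMod 2)}

lemma exists_sum_psi_eq (hD : SchurClosed (m + 1) D) {ι : Type*} [DecidableEq ι] (s : Finset ι)
    {v : ι → Fin n → ZMod 2} (hv : ∀ j ∈ s, v j ∈ D 0) :
    ∃ w ∈ GammaCF m (fun t => D (t + 1)),
      ∑ j ∈ s, psi (v j) = psi (∑ j ∈ s, v j) + (2 : ℤ) • w := by
  induction s using Finset.induction_on with
  | empty => exact ⟨0, zero_mem_gammaCF, by simp [psi_zero]⟩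
  | @insert i s hi ih =>
    have hvs : ∀ j ∈ s, v j ∈ D 0 := fun j hj => hv j (mem_insert_of_mem hj)
    obtain ⟨w, hw, hsum⟩ := ih hvs
    have hcarry := psi_mul_mem_gammaCF_shift hD (hv i (mem_insert_self i s)) (sum_mem hvs)
    refine ⟨_, add_mem_gammaCF hD.shift hcarry hw, ?_⟩
    rw [sum_insert hi, sum_insert hi, hsum, ← add_assoc, psi_add_psi, smul_add]
    abel

lemma exists_psi_eq_sum_psi_basis (hD : SchurClosed (m + 1) D)
    (b : Module.Basis (Fin n) (ZMod 2) (Fin n → ZMod 2)) {s : Finset (Fin n)}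
    (hs : ∀ j ∈ s, b j ∈ D 0) {c : Fin n → ZMod 2} (hc : c ∈ Submodule.span (ZMod 2) (b '' s)) :
    ∃ α : Fin n → ℤ, (∀ j, α j = 0 ∨ α j = 1) ∧ ∃ w ∈ GammaCF m (fun t => D (t + 1)),
      ∑ j ∈ s, α j • psi (b j) = psi c + (2 : ℤ) • w := by
  have hrepr : ∑ j ∈ s, b.repr c j • b j = c := by
    rw [sum_subset (subset_univ s) fun j _ hj => ?_, b.sum_repr c]
    rw [Finsupp.notMem_support_iff.mp fun h => hj (b.mem_span_image.mp hc h), zero_smul]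
  obtain ⟨w, hw, hsum⟩ := exists_sum_psi_eq hD s (v := fun j => b.repr c j • b j)
    fun j hj => (D 0).smul_mem _ (hs j hj)
  refine ⟨fun j => (b.repr c j).val, fun j => ?_, w, hw, ?_⟩
  · have h01 : ∀ u : ZMod 2, (u.val : ℤ) = 0 ∨ (u.val : ℤ) = 1 := by decide
    exact h01 _
  · simp only [← psi_smul, hsum, hrepr]

end Decomposition

section LambdaD

variable {D : ℕ → Submodule (ZMod 2) (Fin n → ZMod 2)}
  {b : Module.Basis (Fin n) (ZMod 2) (Fin n → ZMod 2)}

lemma lambdaD_zero : LambdaD 0 D b = Set.univ :=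
  Set.eq_univ_of_forall fun x => ⟨0, x, by simp, by simp⟩

lemma sum_add_two_smul_mem_lambdaD_succ {α : Fin n → ℤ} (hα : ∀ j, α j = 0 ∨ α j = 1)
    {y : Fin n → ℤ} (hy : y ∈ LambdaD m (fun t => D (t + 1)) b) :
    (∑ j ∈ univ.filter (fun j : Fin n => (j : ℕ) < Module.finrank (ZMod 2) (D 0)),
      α j • psi (b j)) + (2 : ℤ) • y ∈ LambdaD (m + 1) D b := by
  obtain ⟨αy, l, hαy, rfl⟩ := hy
  refine ⟨fun t => Nat.casesOn t α αy, l, ?_, (sum_range_succ_two_pow_smul (fun i =>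
    ∑ j ∈ univ.filter (fun j : Fin n => (j : ℕ) < Module.finrank (ZMod 2) (D i)),
      (Nat.casesOn i α αy : Fin n → ℤ) j • psi (b j)) l).symm⟩
  rintro (_ | i) j
  exacts [hα j, hαy i j]

lemma gammaCF_subset_lambdaD (hD : SchurClosed m D) (hb : SpansChain m D b) :
    GammaCF m D ⊆ LambdaD m D b := by
  induction m generalizing D with
  | zero => simp [lambdaD_zero]
  | succ m ih =>
    intro x hx
    obtain ⟨c, hc, u, hu, rfl⟩ := mem_gammaCF_succ.mp hx
    have hspan := hb 0 m.succ_pos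
    set s := univ.filter fun j : Fin n => (j : ℕ) < Module.finrank (ZMod 2) (D 0)
    rw [show (fun j => b j) '' _ = b '' s by simp [s]] at hspan
    have hs : ∀ j ∈ s, b j ∈ D 0 := fun j hj =>
      hspan ▸ Submodule.subset_span (Set.mem_image_of_mem b hj)
    obtain ⟨α, hα, w, hw, hsum⟩ := exists_psi_eq_sum_psi_basis hD b hs (hspan ▸ hc)
    have hdigits : psi c + (2 : ℤ) • u = ∑ j ∈ s, α j • psi (b j) + (2 : ℤ) • (u - w) := by
      rw [hsum, smul_sub]
      abel
    rw [hdigits]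
    exact sum_add_two_smul_mem_lambdaD_succ hα
      (ih hD.shift hb.shift ((gammaCFAddSubgroup hD.shift).sub_mem hu hw))

lemma lambdaD_subset_gammaCF (hD : SchurClosed m D) (hb : SpansChain m D b) :
    LambdaD m D b ⊆ GammaCF m D := by
  rintro _ ⟨α, l, -, rfl⟩
  let Γ := gammaCFAddSubgroup hD
  refine Γ.add_mem (Γ.sum_mem fun i hi => ?_) (two_pow_smul_mem_gammaCF l)
  rw [smul_sum]
  refine Γ.sum_mem fun j hj => ?_
  have hbj : b j ∈ D i :=
    hb i (mem_range.mp hi) ▸ Submodule.subset_span ⟨j, (mem_filter.mp hj).2, rfl⟩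
  rw [smul_comm]
  exact Γ.zsmul_mem (two_pow_smul_psi_mem_gammaCF (mem_range.mp hi) hbj) _

end LambdaD

theorem gammaCF_eq_lambdaD_general {n a : ℕ} (C : ℕ → Submodule (ZMod 2) (Fin n → ZMod 2))
    (hschur : ∀ i < a, ∀ c ∈ C i, ∀ d ∈ C i, c * d ∈ C (i + 1))
    (b : Module.Basis (Fin n) (ZMod 2) (Fin n → ZMod 2)) (hb : SpansChain a C b) :
    GammaCF a C = LambdaD a C b := by
  have hC : SchurClosed a C := fun i hi => hschur i (by omega)
  exact (gammaCF_subset_lambdaD hC hb).antisymm (lambdaD_subset_gammaCF hC hb)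

/-- If the chain of nested binary linear codes is closed under Schur
product, then for every basis `b` of `(ZMod 2)^n` whose first `k_i` vectors span `C_i`,
the code formula set `Γ_CF` equals the Construction D set `Λ_D`. -/
theorem gammaCF_eq_lambdaD {n a : ℕ} (C : ℕ → Submodule (ZMod 2) (Fin n → ZMod 2))
    (hmono : ∀ i < a, C i ≤ C (i + 1)) (htop : C a = ⊤)
    (hschur : ∀ i < a, ∀ c ∈ C i, ∀ d ∈ C i, c * d ∈ C (i + 1))
    (b : Module.Basis (Fin n) (ZMod 2) (Fin n → ZMod 2)) (hb : SpansChain a C b) :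
    GammaCF a C = LambdaD a C b :=
  gammaCF_eq_lambdaD_general C hschur b hb
end
end

section
/- Let C_0 ⊆ C_1 ⊆ ... ⊆ C_{a-1} ⊆ C_a = (ZMod 2)^n be a family of nested binary linear codes, and define C := { c_0 + c_1·u + ... + c_{a-1}·u^{a-1} | c_i ∈ C_i for each i } ⊆ (Fin n → 𝒰_a), where the c_i are viewed in 𝒰_a^n coefficientwise. Then C is a 𝒰_a-submodule of (Fin n → 𝒰_a), and Φ(C) + 2^a ℤ^n = Γ_CF; that is, { Φ(c) + 2^a l | c ∈ C, l ∈ ℤ^n } = { Σ_{i=0}^{a-1} 2^i ψ(c_i) + 2^a l | c_i ∈ C_i, l ∈ ℤ^n }. -/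
noncomputable section

set_option synthInstance.maxHeartbeats 400000

/-- The quotient ring `𝒰_a = 𝔽₂[u]/u^a`. -/
abbrev Ua (a : ℕ) : Type :=
  Polynomial (ZMod 2) ⧸ Ideal.span {(Polynomial.X : Polynomial (ZMod 2)) ^ a}

/-- The image `u` of the variable `X` in `𝒰_a`. -/
noncomputable def uU (a : ℕ) : Ua a := Ideal.Quotient.mk _ Polynomial.X

/-- The canonical representative (of degree `< a`) of an element of `𝒰_a`. -/
noncomputable def uaRep {a : ℕ} (x : Ua a) : Polynomial (ZMod 2) :=
  Function.surjInv
    (Ideal.Quotient.mk_surjective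
      (I := Ideal.span {(Polynomial.X : Polynomial (ZMod 2)) ^ a})) x
    %ₘ (Polynomial.X ^ a)

/-- The coefficient `b_j` of `u^j` in `x = Σ_{j<a} b_j u^j ∈ 𝒰_a`. -/
noncomputable def uaCoeff {a : ℕ} (x : Ua a) (j : ℕ) : ZMod 2 := (uaRep x).coeff j

/-- The map `Φ : 𝒰_a → ℤ` sending `Σ_{j<a} b_j u^j` to `Σ_{j<a} ψ(b_j) 2^j`. -/
noncomputable def PhiU {a : ℕ} (x : Ua a) : ℤ :=
  ∑ j ∈ Finset.range a, ((uaCoeff x j).val : ℤ) * 2 ^ j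

/-- `Φ` extended componentwise to a map `(Fin n → 𝒰_a) → (Fin n → ℤ)`. -/
noncomputable def PhiV {n a : ℕ} (c : Fin n → Ua a) : Fin n → ℤ := fun k => PhiU (c k)

/-- The Construction A' set `Γ_{A'} = Φ(C) + 2^a ℤ^n` of a code `C ⊆ (Fin n → 𝒰_a)`. -/
def GammaA' {n a : ℕ} (C : Set (Fin n → Ua a)) : Set (Fin n → ℤ) :=
  { x | ∃ c ∈ C, ∃ l : Fin n → ℤ, x = PhiV c + (2 ^ a : ℤ) • l }

/-- The code `C = C₀ + u C₁ + ... + u^{a-1} C_{a-1}` over `𝒰_a` associated to a chain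
of binary codes: all vectors `Σ_{i<a} c_i u^i` with `c_i ∈ C_i`. -/
noncomputable def CodeSet {n : ℕ} (a : ℕ) (C : ℕ → Submodule (ZMod 2) (Fin n → ZMod 2)) :
    Set (Fin n → Ua a) :=
  { x | ∃ c : ℕ → Fin n → ZMod 2,
      (∀ i < a, c i ∈ C i) ∧
      x = fun k => Ideal.Quotient.mk _
        (∑ i ∈ Finset.range a, Polynomial.C (c i k) * Polynomial.X ^ i) }

/-! Write `x ∈ (𝒰_a)^n` as `Σ_{i<a} x_i u^i` with coefficient vectors `x_i ∈ 𝔽₂^n`; then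
`x ∈ C` iff `x_i ∈ C_i` for every `i < a`. The coefficient vectors of `r • x` are the
convolutions `Σ_{j+l=i} r_j x_l`, which lie in `C_i` because `C_l ≤ C_i` for `l ≤ i`; and
`Φ(x) = Σ_i 2^i ψ(x_i)` holds by definition of `Φ`, so `Φ(C) + 2^a ℤ^n = Γ_CF`. -/

open Polynomial Finset

section Coefficients

variable {a : ℕ}

lemma uaRep_mk (p : (ZMod 2)[X]) :
    uaRep (Ideal.Quotient.mk (Ideal.span {X ^ a}) p) = p %ₘ X ^ a := by
  set q := Function.surjInv (Ideal.Quotient.mk_surjective (I := Ideal.span {X ^ a}))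
    (Ideal.Quotient.mk _ p)
  have hdvd : (X : (ZMod 2)[X]) ^ a ∣ q - p := Ideal.mem_span_singleton.mp <|
    Ideal.Quotient.eq.mp (Function.surjInv_eq _ _)
  calc q %ₘ X ^ a = (p + (q - p)) %ₘ X ^ a := by rw [add_sub_cancel]
    _ = p %ₘ X ^ a := by
      rw [add_modByMonic, (modByMonic_eq_zero_iff_dvd (monic_X_pow a)).mpr hdvd, add_zero]

lemma uaCoeff_mk (p : (ZMod 2)[X]) {j : ℕ} (hj : j < a) :
    uaCoeff (Ideal.Quotient.mk (Ideal.span {X ^ a}) p) j = p.coeff j := by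
  rw [uaCoeff, uaRep_mk, modByMonic_eq_sub_mul_div _ (X ^ a), coeff_sub,
    coeff_X_pow_mul', if_neg (not_le.mpr hj), sub_zero]

lemma mk_uaRep (x : Ua a) : Ideal.Quotient.mk (Ideal.span {X ^ a}) (uaRep x) = x := by
  rw [uaRep, modByMonic_eq_sub_mul_div _ (X ^ a), map_sub, map_mul,
    Ideal.Quotient.eq_zero_iff_mem.mpr (Ideal.mem_span_singleton_self _), zero_mul, sub_zero]
  exact Function.surjInv_eq _ _

lemma uaCoeff_eq_zero_of_le (x : Ua a) {j : ℕ} (hj : a ≤ j) : uaCoeff x j = 0 :=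
  coeff_eq_zero_of_degree_lt <| (degree_modByMonic_lt _ (monic_X_pow a)).trans_le
    (by rw [degree_X_pow]; exact_mod_cast hj)

lemma coeff_sum_C_mul_X_pow (b : ℕ → ZMod 2) (j : ℕ) :
    (∑ i ∈ range a, Polynomial.C (b i) * X ^ i).coeff j = if j < a then b j else 0 := by
  simp [finsetSum_coeff]

lemma mk_sum_uaCoeff (x : Ua a) :
    Ideal.Quotient.mk (Ideal.span {X ^ a})
      (∑ i ∈ range a, Polynomial.C (uaCoeff x i) * X ^ i) = x := by
  conv_rhs => rw [← mk_uaRep x]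
  congr 1
  ext j
  rw [coeff_sum_C_mul_X_pow]
  split_ifs with hj
  · rfl
  · exact (uaCoeff_eq_zero_of_le x (not_lt.mp hj)).symm

lemma uaCoeff_add (x y : Ua a) (j : ℕ) : uaCoeff (x + y) j = uaCoeff x j + uaCoeff y j := by
  rcases lt_or_ge j a with hj | hj
  · have h := uaCoeff_mk (uaRep x + uaRep y) hj
    rwa [map_add, mk_uaRep, mk_uaRep, coeff_add] at h
  · simp only [uaCoeff_eq_zero_of_le _ hj, add_zero]

lemma uaCoeff_zero (j : ℕ) : uaCoeff (0 : Ua a) j = 0 := by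
  simpa using uaCoeff_add (0 : Ua a) 0 j

lemma uaCoeff_mul (x y : Ua a) {j : ℕ} (hj : j < a) :
    uaCoeff (x * y) j = ∑ p ∈ antidiagonal j, uaCoeff x p.1 * uaCoeff y p.2 := by
  have h := uaCoeff_mk (uaRep x * uaRep y) hj
  rwa [map_mul, mk_uaRep, mk_uaRep, coeff_mul] at h

end Coefficients

section Code

variable {n a : ℕ}

def uaCoeffVec (x : Fin n → Ua a) (i : ℕ) : Fin n → ZMod 2 := fun k => uaCoeff (x k) i

lemma uaCoeffVec_mk_sum (c : ℕ → Fin n → ZMod 2) {i : ℕ} (hi : i < a) :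
    uaCoeffVec (fun k => Ideal.Quotient.mk (Ideal.span {X ^ a})
      (∑ j ∈ range a, Polynomial.C (c j k) * X ^ j)) i = c i := by
  funext k
  rw [uaCoeffVec, uaCoeff_mk _ hi, coeff_sum_C_mul_X_pow, if_pos hi]

lemma uaCoeffVec_add (x y : Fin n → Ua a) (i : ℕ) :
    uaCoeffVec (x + y) i = uaCoeffVec x i + uaCoeffVec y i :=
  funext fun k => uaCoeff_add (x k) (y k) i

lemma uaCoeffVec_zero (i : ℕ) : uaCoeffVec (0 : Fin n → Ua a) i = 0 :=
  funext fun _ => uaCoeff_zero i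

lemma uaCoeffVec_smul (r : Ua a) (x : Fin n → Ua a) {i : ℕ} (hi : i < a) :
    uaCoeffVec (r • x) i = ∑ p ∈ antidiagonal i, uaCoeff r p.1 • uaCoeffVec x p.2 := by
  funext k
  simp only [uaCoeffVec, Pi.smul_apply, smul_eq_mul, uaCoeff_mul _ _ hi, Finset.sum_apply]

lemma PhiV_eq_sum_uaCoeffVec (x : Fin n → Ua a) :
    PhiV x = ∑ i ∈ range a, (2 ^ i : ℤ) • psi (uaCoeffVec x i) := by
  funext k
  simp only [PhiV, PhiU, psi, uaCoeffVec, Finset.sum_apply, Pi.smul_apply, smul_eq_mul, mul_comm]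

variable {C : ℕ → Submodule (ZMod 2) (Fin n → ZMod 2)}

lemma mem_codeSet_iff {x : Fin n → Ua a} :
    x ∈ CodeSet a C ↔ ∀ i < a, uaCoeffVec x i ∈ C i := by
  constructor
  · rintro ⟨c, hc, rfl⟩ i hi
    rw [uaCoeffVec_mk_sum c hi]
    exact hc i hi
  · exact fun h => ⟨uaCoeffVec x, h, funext fun k => (mk_sum_uaCoeff (x k)).symm⟩

lemma add_mem_codeSet {x y : Fin n → Ua a} (hx : x ∈ CodeSet a C) (hy : y ∈ CodeSet a C) :
    x + y ∈ CodeSet a C := by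
  rw [mem_codeSet_iff] at *
  intro i hi
  rw [uaCoeffVec_add]
  exact add_mem (hx i hi) (hy i hi)

lemma zero_mem_codeSet : (0 : Fin n → Ua a) ∈ CodeSet a C :=
  mem_codeSet_iff.mpr fun i _ => uaCoeffVec_zero (a := a) i ▸ zero_mem (C i)

lemma smul_mem_codeSet (hmono : ∀ i < a, C i ≤ C (i + 1)) (r : Ua a) {x : Fin n → Ua a}
    (hx : x ∈ CodeSet a C) : r • x ∈ CodeSet a C := by
  have hC : MonotoneOn C (Set.Iic a) :=
    monotoneOn_of_le_add_one Set.ordConnected_Iic fun i _ _ hi => hmono i hi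
  rw [mem_codeSet_iff] at *
  intro i hi
  rw [uaCoeffVec_smul r x hi]
  refine sum_mem fun p hp => Submodule.smul_mem _ _ ?_
  have hp2 : p.2 ≤ i := (mem_antidiagonal.mp hp) ▸ Nat.le_add_left _ _
  exact hC (Set.mem_Iic.mpr (by omega)) (Set.mem_Iic.mpr hi.le) hp2 (hx p.2 (by omega))

def codeSubmodule (hmono : ∀ i < a, C i ≤ C (i + 1)) : Submodule (Ua a) (Fin n → Ua a) where
  carrier := CodeSet a C
  add_mem' := add_mem_codeSet
  zero_mem' := zero_mem_codeSet
  smul_mem' := smul_mem_codeSet hmono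

lemma gammaA'_codeSet : GammaA' (CodeSet a C) = GammaCF a C := by
  ext z
  constructor
  · rintro ⟨x, hx, l, rfl⟩
    exact ⟨uaCoeffVec x, l, mem_codeSet_iff.mp hx, by rw [PhiV_eq_sum_uaCoeffVec]⟩
  · rintro ⟨c, l, hc, rfl⟩
    refine ⟨_, ⟨c, hc, rfl⟩, l, ?_⟩
    rw [PhiV_eq_sum_uaCoeffVec]
    congr 1
    exact sum_congr rfl fun i hi => by rw [uaCoeffVec_mk_sum c (mem_range.mp hi)]

end Code

theorem codeSet_submodule_and_gammaA'_eq_gammaCF_general {n a : ℕ}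
    (C : ℕ → Submodule (ZMod 2) (Fin n → ZMod 2))
    (hmono : ∀ i < a, C i ≤ C (i + 1)) :
    (∃ M : Submodule (Ua a) (Fin n → Ua a),
        (M : Set (Fin n → Ua a)) = CodeSet a C) ∧
    GammaA' (CodeSet a C) = GammaCF a C :=
  ⟨⟨codeSubmodule hmono, rfl⟩, gammaA'_codeSet⟩

/-- The code `C = C₀ + u C₁ + ... + u^{a-1} C_{a-1}` associated to a
chain of nested binary linear codes is a `𝒰_a`-submodule of `(Fin n → 𝒰_a)`, and
`Φ(C) + 2^a ℤ^n = Γ_CF`. -/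
theorem codeSet_submodule_and_gammaA'_eq_gammaCF {n a : ℕ}
    (C : ℕ → Submodule (ZMod 2) (Fin n → ZMod 2))
    (hmono : ∀ i < a, C i ≤ C (i + 1)) (htop : C a = ⊤) :
    (∃ M : Submodule (Ua a) (Fin n → Ua a),
        (M : Set (Fin n → Ua a)) = CodeSet a C) ∧
    GammaA' (CodeSet a C) = GammaCF a C :=
  codeSet_submodule_and_gammaA'_eq_gammaCF_general C hmono
end
end
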